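/- arXiv:1709.08571 — 2 statements merged into one kernel-verified Lean document; each statement's English description precedes it below -/
import Mathlib

section
/- Let f : ℝ^d → ℝ be twice continuously differentiable with L2-Lipschitz Hessian, let ε > 0, and let x₀ satisfy f(x₀) − inf f ≤ Δ < ∞. Suppose x₁ = x₀ and (v_j) are unit vectors such that for every j: λ_min(∇²f(x_j)) ≥ v_jᵀ∇²f(x_j)v_j − ε/2, and whenever v_jᵀ∇²f(x_j)v_j ≤ −ε/2 the update x_{j+1} = x_j − (2·|v_jᵀ∇²f(x_j)v_j|/L2)·sign(v_jᵀ∇f(x_j))·v_j is performed. Then the first index j* with v_{j*}ᵀ∇²f(x_{j*})v_{j*} > −ε/2 satisfies j* ≤ 1 + 12·L2²·(f(x₁) − f(x_{j*}))/ε³ ≤ 1 + 12·L2²·Δ/ε³, and at termination λ_min(∇²f(x_{j*})) ≥ −ε. -/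
/-!
Along the line `t ↦ x + t • h` the Hessian of `f` moves by at most `L t ‖h‖`, so integrating twice
gives the cubic upper model `f (x + h) ≤ f x + ⟪∇f x, h⟫ + ⟪∇²f x h, h⟫ / 2 + L ‖h‖³ / 6`.
A step of length `η` along `∓v` (the sign chosen against the gradient) makes the first-order
term nonpositive, and for `α = ⟪∇²f x v, v⟫ ≤ -ε/2` the length `η = 2|α|/L` minimises the rest of
the model, decreasing `f` by at least `ε³ / (12 L²)`. As `f` drops by at most `Δ` in total, a point
of curvature `> -ε/2` along `v` is reached within `1 + 12 L² Δ / ε³` steps, and there the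
eigenvalue hypothesis gives `λ_min ≥ -ε`.
-/

open scoped RealInnerProductSpace

noncomputable def sgn (t : ℝ) : ℝ := if 0 ≤ t then 1 else -1

theorem sgn_mul_self (t : ℝ) : sgn t * t = |t| := by
  unfold sgn
  split_ifs with ht
  · rw [one_mul, abs_of_nonneg ht]
  · rw [neg_one_mul, abs_of_neg (not_le.1 ht)]

theorem sgn_mul_sgn (t : ℝ) : sgn t * sgn t = 1 := by
  unfold sgn; split_ifs <;> norm_num

theorem abs_sgn (t : ℝ) : |sgn t| = 1 := by
  unfold sgn; split_ifs <;> norm_num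

theorem le_of_hasDerivAt_le_of_nonneg {f f' g g' : ℝ → ℝ}
    (hf : ∀ t, HasDerivAt f (f' t) t) (hg : ∀ t, HasDerivAt g (g' t) t) (h₀ : f 0 ≤ g 0)
    (hle : ∀ t, 0 ≤ t → f' t ≤ g' t) {s : ℝ} (hs : 0 ≤ s) : f s ≤ g s :=
  image_le_of_deriv_right_le_deriv_boundary
    (fun t _ => (hf t).continuousAt.continuousWithinAt) (fun t _ => (hf t).hasDerivWithinAt) h₀
    (fun t _ => (hg t).continuousAt.continuousWithinAt) (fun t _ => (hg t).hasDerivWithinAt)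
    (fun t ht => hle t ht.1) ⟨hs, le_rfl⟩

theorem le_taylor_two_add_cube_of_second_deriv_le {φ φ' φ'' : ℝ → ℝ} {M : ℝ}
    (hφ : ∀ t, HasDerivAt φ (φ' t) t) (hφ' : ∀ t, HasDerivAt φ' (φ'' t) t)
    (hM : ∀ t, 0 ≤ t → φ'' t ≤ φ'' 0 + M * t) {s : ℝ} (hs : 0 ≤ s) :
    φ s ≤ φ 0 + φ' 0 * s + φ'' 0 * s ^ 2 / 2 + M * s ^ 3 / 6 := by
  have hB' (t : ℝ) : HasDerivAt (fun t => φ' 0 + (φ'' 0 * t + M / 2 * t ^ 2))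
      (φ'' 0 + M * t) t :=
    ((((hasDerivAt_id t).const_mul _).add ((hasDerivAt_pow 2 t).const_mul _)).const_add
      _).congr_deriv (by simp; ring)
  have hB (t : ℝ) : HasDerivAt (fun t => φ 0 + (φ' 0 * t + φ'' 0 / 2 * t ^ 2 + M / 6 * t ^ 3))
      (φ' 0 + (φ'' 0 * t + M / 2 * t ^ 2)) t :=
    (((((hasDerivAt_id t).const_mul _).add ((hasDerivAt_pow 2 t).const_mul _)).add
      ((hasDerivAt_pow 3 t).const_mul _)).const_add _).congr_deriv (by simp; ring)
  have hφ'_le (t : ℝ) (ht : 0 ≤ t) := le_of_hasDerivAt_le_of_nonneg hφ' hB' (by simp) hM ht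
  have := le_of_hasDerivAt_le_of_nonneg hφ hB (by simp) hφ'_le hs
  linarith

theorem negative_curvature_step_model_le {α L ε : ℝ} (hL : 0 < L) (hε : 0 ≤ ε)
    (hα : α ≤ -ε / 2) :
    α * (2 * |α| / L) ^ 2 / 2 + L * (2 * |α| / L) ^ 3 / 6 ≤ -(ε ^ 3 / (12 * L ^ 2)) := by
  have hcube : (ε / 2) ^ 3 ≤ (-α) ^ 3 := pow_le_pow_left₀ (by linarith) (by linarith) 3
  have hmodel : α * (2 * |α| / L) ^ 2 / 2 + L * (2 * |α| / L) ^ 3 / 6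
      = -(2 / 3 * (-α) ^ 3 / L ^ 2) := by
    rw [abs_of_nonpos (by linarith)]
    field_simp
    ring
  rw [hmodel, neg_le_neg_iff]
  calc ε ^ 3 / (12 * L ^ 2) = 2 / 3 * (ε / 2) ^ 3 / L ^ 2 := by field_simp; ring
    _ ≤ 2 / 3 * (-α) ^ 3 / L ^ 2 := by gcongr

theorem exists_first_stop_of_descent {P : ℕ → Prop} {a : ℕ → ℝ} {δ B : ℝ} {m : ℕ}
    (hδ : 0 < δ) (hB : ∀ j, a m - a j ≤ B)
    (hstep : ∀ j, m ≤ j → ¬P j → a (j + 1) ≤ a j - δ) :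
    ∃ k, m ≤ k ∧ P k ∧ (∀ i, m ≤ i → i < k → ¬P i) ∧ ((k : ℝ) - m) * δ ≤ a m - a k := by
  have descent : ∀ n, m ≤ n → (∀ i, m ≤ i → i < n → ¬P i) → ((n : ℝ) - m) * δ ≤ a m - a n := by
    refine Nat.le_induction (by simp) fun n hmn ih hnP => ?_
    have := hstep n hmn (hnP n hmn n.lt_succ_self)
    have := ih fun i hi hin => hnP i hi (hin.trans n.lt_succ_self)
    push_cast
    linarith
  have hstop : ∃ k, m ≤ k ∧ P k := by
    by_contra! hnever
    obtain ⟨n, hn⟩ := exists_nat_gt (B / δ)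
    have := descent (m + n) (by omega) fun i hi _ => hnever i hi
    push_cast at this
    rw [div_lt_iff₀ hδ] at hn
    linarith [hB (m + n)]
  classical
  obtain ⟨hmk, hPk⟩ := Nat.find_spec hstop
  have hfirst : ∀ i, m ≤ i → i < Nat.find hstop → ¬P i :=
    fun i hi hik hPi => Nat.find_min hstop hik ⟨hi, hPi⟩
  exact ⟨Nat.find hstop, hmk, hPk, hfirst, descent _ hmk hfirst⟩

section InnerProductSpace

variable {E : Type*} [NormedAddCommGroup E] [InnerProductSpace ℝ E]

theorem hasDerivAt_comp_add_smul {F : Type*} [NormedAddCommGroup F] [NormedSpace ℝ F]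
    {g : E → F} (hg : Differentiable ℝ g) (x h : E) (t : ℝ) :
    HasDerivAt (fun t : ℝ => g (x + t • h)) (fderiv ℝ g (x + t • h) h) t := by
  have hline : HasDerivAt (fun t : ℝ => x + t • h) h t := by
    simpa using ((hasDerivAt_id t).smul_const h).const_add x
  exact (hg _).hasFDerivAt.comp_hasDerivAt t hline

theorem inner_apply_self_le_opNorm_mul_sq (A : E →L[ℝ] E) (h : E) :
    ⟪A h, h⟫ ≤ ‖A‖ * ‖h‖ ^ 2 :=
  calc ⟪A h, h⟫ ≤ ‖A h‖ * ‖h‖ := real_inner_le_norm _ _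
    _ ≤ ‖A‖ * ‖h‖ * ‖h‖ := by gcongr; exact A.le_opNorm h
    _ = ‖A‖ * ‖h‖ ^ 2 := by ring

variable [CompleteSpace E] {f : E → ℝ} {L : ℝ}

theorem ContDiff.differentiable_gradient (hf : ContDiff ℝ 2 f) :
    Differentiable ℝ (gradient f) :=
  (InnerProductSpace.toDual ℝ E).symm.toContinuousLinearEquiv.differentiable.comp
    ((hf.fderiv_right (m := 1) (by norm_num)).differentiable (by norm_num))

theorem le_taylor_two_add_cube_of_hessian_lipschitz (hf : ContDiff ℝ 2 f)
    (hH : ∀ a b, ‖fderiv ℝ (gradient f) a - fderiv ℝ (gradient f) b‖ ≤ L * ‖a - b‖) (x h : E) :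
    f (x + h) ≤ f x + ⟪gradient f x, h⟫ + ⟪fderiv ℝ (gradient f) x h, h⟫ / 2
      + L * ‖h‖ ^ 3 / 6 := by
  have hφ (t : ℝ) : HasDerivAt (fun t : ℝ => f (x + t • h)) ⟪gradient f (x + t • h), h⟫ t := by
    rw [inner_gradient_left]
    exact hasDerivAt_comp_add_smul (hf.differentiable (by norm_num)) x h t
  have hφ' (t : ℝ) : HasDerivAt (fun t : ℝ => ⟪gradient f (x + t • h), h⟫)
      ⟪fderiv ℝ (gradient f) (x + t • h) h, h⟫ t := by
    simpa using (hasDerivAt_comp_add_smul hf.differentiable_gradient x h t).inner ℝ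
      (hasDerivAt_const t h)
  have hM (t : ℝ) (ht : 0 ≤ t) : ⟪fderiv ℝ (gradient f) (x + t • h) h, h⟫ ≤
      ⟪fderiv ℝ (gradient f) (x + (0 : ℝ) • h) h, h⟫ + L * ‖h‖ ^ 3 * t := by
    have := inner_apply_self_le_opNorm_mul_sq
      (fderiv ℝ (gradient f) (x + t • h) - fderiv ℝ (gradient f) x) h
    have hLip := hH (x + t • h) x
    simp only [sub_apply, inner_sub_left, add_sub_cancel_left, norm_smul,
      Real.norm_of_nonneg ht] at this hLip
    simp only [zero_smul, add_zero]
    nlinarith [sq_nonneg ‖h‖]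
  simpa using le_taylor_two_add_cube_of_second_deriv_le hφ hφ' hM zero_le_one

theorem image_sub_smul_sgn_le (hf : ContDiff ℝ 2 f)
    (hH : ∀ a b, ‖fderiv ℝ (gradient f) a - fderiv ℝ (gradient f) b‖ ≤ L * ‖a - b‖)
    {p w : E} (hw : ‖w‖ = 1) {η : ℝ} (hη : 0 ≤ η) :
    f (p - (η * sgn ⟪gradient f p, w⟫) • w) ≤
      f p + ⟪fderiv ℝ (gradient f) p w, w⟫ * η ^ 2 / 2 + L * η ^ 3 / 6 := by
  set s := sgn ⟪gradient f p, w⟫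
  have hgrad : ⟪gradient f p, -((η * s) • w)⟫ = -(η * |⟪gradient f p, w⟫|) := by
    rw [inner_neg_right, real_inner_smul_right, mul_assoc, sgn_mul_self]
  have hquad : ⟪fderiv ℝ (gradient f) p (-((η * s) • w)), -((η * s) • w)⟫
      = ⟪fderiv ℝ (gradient f) p w, w⟫ * η ^ 2 := by
    rw [map_neg, inner_neg_neg, map_smul, real_inner_smul_left, real_inner_smul_right]
    linear_combination ⟪fderiv ℝ (gradient f) p w, w⟫ * η ^ 2 * sgn_mul_sgn ⟪gradient f p, w⟫
  have hnorm : ‖-((η * s) • w)‖ = η := by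
    rw [norm_neg, norm_smul, hw, Real.norm_eq_abs, abs_mul, abs_sgn, abs_of_nonneg hη]
    ring
  have := le_taylor_two_add_cube_of_hessian_lipschitz hf hH p (-((η * s) • w))
  rw [← sub_eq_add_neg, hgrad, hquad, hnorm] at this
  nlinarith [abs_nonneg ⟪gradient f p, w⟫]

theorem negative_curvature_step_le (hf : ContDiff ℝ 2 f)
    (hH : ∀ a b, ‖fderiv ℝ (gradient f) a - fderiv ℝ (gradient f) b‖ ≤ L * ‖a - b‖)
    (hL : 0 < L) {ε : ℝ} (hε : 0 ≤ ε) {p w : E} (hw : ‖w‖ = 1)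
    (hα : ⟪fderiv ℝ (gradient f) p w, w⟫ ≤ -ε / 2) :
    f (p - ((2 * |⟪fderiv ℝ (gradient f) p w, w⟫| / L) * sgn ⟪gradient f p, w⟫) • w)
      ≤ f p - ε ^ 3 / (12 * L ^ 2) := by
  have := image_sub_smul_sgn_le hf hH (p := p) hw (η := 2 * |⟪fderiv ℝ (gradient f) p w, w⟫| / L)
    (by positivity)
  linarith [negative_curvature_step_model_le hL hε hα]

end InnerProductSpace

/-- the negative curvature descent (NCD) algorithm terminates within
`1 + 12·L2²·Δ/ε³` iterations at a point whose Hessian has smallest eigenvalue `≥ -ε`. -/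
theorem negative_curvature_descent_guarantee {d : ℕ}
    (f : EuclideanSpace ℝ (Fin d) → ℝ) (L2 Δ ε : ℝ)
    (hL2 : 0 < L2) (hε : 0 < ε)
    (hf : ContDiff ℝ 2 f)
    (hHlip : ∀ a b : EuclideanSpace ℝ (Fin d),
      ‖fderiv ℝ (gradient f) a - fderiv ℝ (gradient f) b‖ ≤ L2 * ‖a - b‖)
    (x₀ : EuclideanSpace ℝ (Fin d))
    (hΔ : ∀ z : EuclideanSpace ℝ (Fin d), f x₀ - f z ≤ Δ)
    (x v : ℕ → EuclideanSpace ℝ (Fin d))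
    (hx1 : x 1 = x₀)
    (hv : ∀ j : ℕ, 1 ≤ j → ‖v j‖ = 1)
    (hmin : ∀ j : ℕ, 1 ≤ j → ∀ u : EuclideanSpace ℝ (Fin d), ‖u‖ = 1 →
      ⟪(fderiv ℝ (gradient f) (x j)) u, u⟫ ≥
        ⟪(fderiv ℝ (gradient f) (x j)) (v j), v j⟫ - ε / 2)
    (hupd : ∀ j : ℕ, 1 ≤ j →
      ⟪(fderiv ℝ (gradient f) (x j)) (v j), v j⟫ ≤ -ε / 2 →
      x (j + 1) = x j -
        ((2 * |⟪(fderiv ℝ (gradient f) (x j)) (v j), v j⟫| / L2) *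
          sgn ⟪gradient f (x j), v j⟫) • v j) :
    ∃ jstar : ℕ, 1 ≤ jstar ∧
      ⟪(fderiv ℝ (gradient f) (x jstar)) (v jstar), v jstar⟫ > -ε / 2 ∧
      (∀ i : ℕ, 1 ≤ i → i < jstar →
        ¬(⟪(fderiv ℝ (gradient f) (x i)) (v i), v i⟫ > -ε / 2)) ∧
      (jstar : ℝ) ≤ 1 + 12 * L2 ^ 2 * (f (x 1) - f (x jstar)) / ε ^ 3 ∧
      (jstar : ℝ) ≤ 1 + 12 * L2 ^ 2 * Δ / ε ^ 3 ∧
      ∀ u : EuclideanSpace ℝ (Fin d), ‖u‖ = 1 →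
        ⟪(fderiv ℝ (gradient f) (x jstar)) u, u⟫ ≥ -ε := by
  have hδ : 0 < ε ^ 3 / (12 * L2 ^ 2) := by positivity
  obtain ⟨k, hk, hstop, hfirst, hdescent⟩ := exists_first_stop_of_descent
    (P := fun j => ⟪(fderiv ℝ (gradient f) (x j)) (v j), v j⟫ > -ε / 2) (a := fun j => f (x j))
    hδ (fun j => hx1 ▸ hΔ (x j)) fun j hj hcurv => by
      rw [hupd j hj (not_lt.1 hcurv)]
      exact negative_curvature_step_le hf hHlip hL2 hε.le (hv j hj) (not_lt.1 hcurv)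
  have hbound : (k : ℝ) ≤ 1 + 12 * L2 ^ 2 * (f (x 1) - f (x k)) / ε ^ 3 := by
    have := (le_div_iff₀ hδ).2 hdescent
    rw [div_div_eq_mul_div, mul_comm (f (x 1) - f (x k)), Nat.cast_one] at this
    linarith
  refine ⟨k, hk, hstop, hfirst, hbound, hbound.trans ?_, fun u hu => ?_⟩
  · gcongr
    exact hx1 ▸ hΔ (x k)
  · linarith [hmin k hk u hu]
end

section
/- Let f : ℝ^d → ℝ be differentiable with L1-Lipschitz gradient (L1 > 0). Let ε₁ > 0 and let g ∈ ℝ^d satisfy ‖g − ∇f(x)‖ ≤ ε₄ with 0 ≤ ε₄ ≤ ε₁/(2√2). Set x⁺ = x − (1/L1)·g. Then f(x) − f(x⁺) ≥ ‖g‖²/(4·L1) − ε₁²/(8·L1). -/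
open scoped RealInnerProductSpace

/-
Along the segment from `x` to `y`, the slope of `f` exceeds `⟪∇f x, y - x⟫` by at most
`L t ‖y - x‖²`, which integrates to the descent lemma
`f y ≤ f x + ⟪∇f x, y - x⟫ + L/2 ‖y - x‖²`; at `y = x - g/L` it reads
`f (x - g/L) ≤ f x - ⟪∇f x, g⟫/L + ‖g‖²/(2L)`.
If `‖g - ∇f x‖ ≤ ε`, then Cauchy–Schwarz and Young's inequality `ε‖g‖ ≤ ‖g‖²/4 + ε²` give
`⟪∇f x, g⟫ ≥ 3‖g‖²/4 - ε²`, so the step decreases `f` by at least `‖g‖²/(4L) - ε²/L`,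
and `ε² ≤ ε₁²/8`.
-/

variable {E : Type*} [NormedAddCommGroup E] [InnerProductSpace ℝ E]

theorem HasGradientAt.hasDerivAt_comp_add_smul [CompleteSpace E] {f : E → ℝ} {f' x v : E}
    {t : ℝ} (hf : HasGradientAt f f' (x + t • v)) :
    HasDerivAt (fun s : ℝ => f (x + s • v)) ⟪f', v⟫ t := by
  have hline : HasDerivAt (fun s : ℝ => x + s • v) v t := by
    simpa using ((hasDerivAt_id t).smul_const v).const_add x
  exact hf.hasFDerivAt.comp_hasDerivAt t hline

theorem le_add_inner_add_sq_of_gradient_lipschitz [CompleteSpace E] {f : E → ℝ} {f' : E → E}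
    {L : ℝ} (hf : ∀ x, HasGradientAt f (f' x) x) (hf' : ∀ a b, ‖f' a - f' b‖ ≤ L * ‖a - b‖)
    (x y : E) : f y ≤ f x + ⟪f' x, y - x⟫ + L / 2 * ‖y - x‖ ^ 2 := by
  set v := y - x
  have hline (t : ℝ) : HasDerivAt (fun s : ℝ => f (x + s • v)) ⟪f' (x + t • v), v⟫ t :=
    (hf _).hasDerivAt_comp_add_smul
  have hbound (t : ℝ) : HasDerivAt (fun s : ℝ => f x + s * ⟪f' x, v⟫ + L / 2 * s ^ 2 * ‖v‖ ^ 2)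
      (⟪f' x, v⟫ + L * t * ‖v‖ ^ 2) t := by
    have := (((hasDerivAt_id t).mul_const ⟪f' x, v⟫).const_add (f x)).add
      (((hasDerivAt_pow 2 t).const_mul (L / 2)).mul_const (‖v‖ ^ 2))
    exact this.congr_deriv (by push_cast; ring)
  have hslope {t : ℝ} (ht : 0 ≤ t) : ⟪f' (x + t • v), v⟫ ≤ ⟪f' x, v⟫ + L * t * ‖v‖ ^ 2 := by
    have hcs := calc ⟪f' (x + t • v) - f' x, v⟫
        _ ≤ ‖f' (x + t • v) - f' x‖ * ‖v‖ := real_inner_le_norm _ _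
        _ ≤ L * ‖x + t • v - x‖ * ‖v‖ := by gcongr; exact hf' _ _
        _ = L * t * ‖v‖ ^ 2 := by simp [norm_smul, abs_of_nonneg ht]; ring
    rw [inner_sub_left] at hcs
    linarith
  have key := image_le_of_deriv_right_le_deriv_boundary (a := 0) (b := 1)
    (fun t _ => (hline t).continuousAt.continuousWithinAt)
    (fun t _ => (hline t).hasDerivWithinAt) (by simp)
    (fun t _ => (hbound t).continuousAt.continuousWithinAt)
    (fun t _ => (hbound t).hasDerivWithinAt) (fun t ht => hslope ht.1)
    (Set.right_mem_Icc.2 zero_le_one)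
  simpa [v] using key

theorem three_quarters_sq_sub_sq_le_inner {a g : E} {ε : ℝ} (h : ‖g - a‖ ≤ ε) :
    3 / 4 * ‖g‖ ^ 2 - ε ^ 2 ≤ ⟪a, g⟫ := by
  have hcs : ⟪g - a, g⟫ ≤ ε * ‖g‖ :=
    (real_inner_le_norm _ _).trans (mul_le_mul_of_nonneg_right h (norm_nonneg _))
  rw [inner_sub_left, real_inner_self_eq_norm_sq] at hcs
  nlinarith [sq_nonneg (‖g‖ / 2 - ε)]

theorem sq_div_sub_sq_div_le_sub_gradient_step [CompleteSpace E] {f : E → ℝ} {f' : E → E}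
    {L ε : ℝ} (hL : 0 < L) (hf : ∀ x, HasGradientAt f (f' x) x)
    (hf' : ∀ a b, ‖f' a - f' b‖ ≤ L * ‖a - b‖) {x g : E} (hg : ‖g - f' x‖ ≤ ε) :
    ‖g‖ ^ 2 / (4 * L) - ε ^ 2 / L ≤ f x - f (x - (1 / L) • g) := by
  have hdescent := le_add_inner_add_sq_of_gradient_lipschitz hf hf' x (x - (1 / L) • g)
  have hinner := three_quarters_sq_sub_sq_le_inner hg
  rw [sub_sub_cancel_left, inner_neg_right, real_inner_smul_right, norm_neg, norm_smul,
    Real.norm_of_nonneg (by positivity)] at hdescent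
  have hscaled := mul_le_mul_of_nonneg_left hinner (one_div_pos.2 hL).le
  field_simp at hdescent hscaled ⊢
  nlinarith

theorem inexact_gradient_step_decrease_general {d : ℕ}
    (f : EuclideanSpace ℝ (Fin d) → ℝ) (L1 ε₁ ε₄ : ℝ)
    (hL1 : 0 < L1)
    (hdiff : Differentiable ℝ f)
    (hglip : ∀ a b : EuclideanSpace ℝ (Fin d),
      ‖gradient f a - gradient f b‖ ≤ L1 * ‖a - b‖)
    (x g : EuclideanSpace ℝ (Fin d))
    (hε₄0 : 0 ≤ ε₄) (hε₄ : ε₄ ≤ ε₁ / (2 * Real.sqrt 2))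
    (hg : ‖g - gradient f x‖ ≤ ε₄)
    (xp : EuclideanSpace ℝ (Fin d)) (hxp : xp = x - (1 / L1) • g) :
    f x - f xp ≥ ‖g‖ ^ 2 / (4 * L1) - ε₁ ^ 2 / (8 * L1) := by
  have hε : ε₄ ^ 2 ≤ ε₁ ^ 2 / 8 := calc
    ε₄ ^ 2 ≤ (ε₁ / (2 * Real.sqrt 2)) ^ 2 := pow_le_pow_left₀ hε₄0 hε₄ 2
    _ = ε₁ ^ 2 / 8 := by rw [div_pow, mul_pow, Real.sq_sqrt zero_le_two]; norm_num
  have hstep := sq_div_sub_sq_div_le_sub_gradient_step hL1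
    (fun y => (hdiff y).hasGradientAt) hglip hg
  have hεL : ε₄ ^ 2 / L1 ≤ ε₁ ^ 2 / (8 * L1) := by
    rw [← div_div]; gcongr
  rw [hxp]
  linarith

/-- objective decrease of an inexact gradient step with gradient error
`ε₄ ≤ ε₁/(2√2)`. -/
theorem inexact_gradient_step_decrease {d : ℕ}
    (f : EuclideanSpace ℝ (Fin d) → ℝ) (L1 ε₁ ε₄ : ℝ)
    (hL1 : 0 < L1) (hε₁ : 0 < ε₁)
    (hdiff : Differentiable ℝ f)
    (hglip : ∀ a b : EuclideanSpace ℝ (Fin d),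
      ‖gradient f a - gradient f b‖ ≤ L1 * ‖a - b‖)
    (x g : EuclideanSpace ℝ (Fin d))
    (hε₄0 : 0 ≤ ε₄) (hε₄ : ε₄ ≤ ε₁ / (2 * Real.sqrt 2))
    (hg : ‖g - gradient f x‖ ≤ ε₄)
    (xp : EuclideanSpace ℝ (Fin d)) (hxp : xp = x - (1 / L1) • g) :
    f x - f xp ≥ ‖g‖ ^ 2 / (4 * L1) - ε₁ ^ 2 / (8 * L1) :=
  inexact_gradient_step_decrease_general f L1 ε₁ ε₄ hL1 hdiff hglip x g hε₄0 hε₄ hg xp hxp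
end
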